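/- arXiv:2107.03061 — 5 statements merged into one kernel-verified Lean document; each statement's English description precedes it below -/
import Mathlib

section
/- For every continuous function f on the closed unit cube [0,1]^n, the multivariate Bernstein polynomials of f converge uniformly to f: the supremum over [0,1]^n of |f - B_k^0(f)| tends to 0 as k tends to infinity. -/
/-- The Bernstein basis polynomial `p_{k,j}(t) = C(k,j) t^j (1-t)^{k-j}`. -/
noncomputable def bernsteinBasis (k j : ℕ) (t : ℝ) : ℝ :=
  (k.choose j : ℝ) * t ^ j * (1 - t) ^ (k - j)

/-- The multivariate Bernstein polynomial on the unit cube `[0,1]^n`: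
`B_k^0(f)(t) = Σ_{j : (Fin n) → {0,…,k}} f(j/k) ∏_i p_{k, j_i}(t_i)`. -/
noncomputable def bernsteinCube (n k : ℕ) (f : (Fin n → ℝ) → ℝ) (t : Fin n → ℝ) : ℝ :=
  ∑ j : Fin n → Fin (k + 1),
    f (fun i => ((j i : ℕ) : ℝ) / (k : ℝ)) * ∏ i, bernsteinBasis k (j i) (t i)

lemma bernsteinBasis_eq (k j : ℕ) (t : ℝ) :
    bernsteinBasis k j t = (bernsteinPolynomial ℝ k j).eval t := by
  simp [bernsteinBasis, bernsteinPolynomial, mul_comm]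

lemma sum_bernsteinBasis (k : ℕ) (t : ℝ) :
    ∑ m : Fin (k + 1), bernsteinBasis k m t = 1 := by
  have := bernsteinPolynomial.sum ℝ k
  apply_fun fun p => Polynomial.eval t p at this
  rw [Fin.sum_univ_eq_sum_range (fun m => bernsteinBasis k m t)]
  simpa [bernsteinBasis_eq, Polynomial.eval_finset_sum] using this

lemma variance_bernsteinBasis {k : ℕ} (hk : 0 < k) (t : ℝ) :
    ∑ m : Fin (k + 1), (t - (m : ℝ) / k) ^ 2 * bernsteinBasis k m t = t * (1 - t) / k := by
  have hk' : (k : ℝ) ≠ 0 := Nat.cast_ne_zero.mpr hk.ne'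
  have := bernsteinPolynomial.variance ℝ k
  apply_fun fun p => Polynomial.eval t p at this
  simp only [Polynomial.eval_finset_sum, Polynomial.eval_mul, Polynomial.eval_pow,
    Polynomial.eval_sub, Polynomial.eval_natCast, nsmul_eq_mul, Polynomial.eval_X,
    Polynomial.eval_one, Polynomial.eval_smul, smul_eq_mul] at this
  rw [Fin.sum_univ_eq_sum_range (fun m => (t - (m : ℝ) / k) ^ 2 * bernsteinBasis k m t)]
  have key : ∀ m ∈ Finset.range (k+1), (t - (m:ℝ)/k)^2 * bernsteinBasis k m t
      = ((k:ℝ) * t - m)^2 * (bernsteinPolynomial ℝ k m).eval t / k^2 := by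
    intro m _
    rw [bernsteinBasis_eq]
    have h1 : t - (m : ℝ) / k = ((k : ℝ) * t - m) / k := by rw [sub_div, mul_div_cancel_left₀ _ hk']
    rw [h1, div_pow, div_mul_eq_mul_div]
  rw [Finset.sum_congr rfl key, ← Finset.sum_div, this]
  field_simp

lemma sum_pi_prod {n k : ℕ} (F : Fin n → Fin (k + 1) → ℝ) :
    ∑ j : Fin n → Fin (k + 1), ∏ i, F i (j i) = ∏ i, ∑ m, F i m := by
  have := Finset.prod_univ_sum (fun _ : Fin n => (Finset.univ : Finset (Fin (k + 1)))) F
  rw [Fintype.piFinset_univ] at this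
  exact this.symm

lemma sum_weighted {n k : ℕ} (p h : Fin n → Fin (k + 1) → ℝ) (i : Fin n)
    (hp : ∀ i', ∑ m, p i' m = 1) :
    ∑ j : Fin n → Fin (k + 1), h i (j i) * ∏ i', p i' (j i') = ∑ m, h i m * p i m := by
  set G : Fin n → Fin (k + 1) → ℝ := fun i' m => if i' = i then h i m * p i m else p i' m with hG
  have step : ∀ j : Fin n → Fin (k + 1),
      h i (j i) * ∏ i', p i' (j i') = ∏ i', G i' (j i') := by
    intro j
    rw [← Finset.mul_prod_erase Finset.univ (fun i' => G i' (j i')) (Finset.mem_univ i),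
      ← Finset.mul_prod_erase Finset.univ (fun i' => p i' (j i')) (Finset.mem_univ i),
      ← mul_assoc]
    congr 1
    · simp [hG]
    · exact Finset.prod_congr rfl fun x hx => by
        simp only [Finset.mem_erase] at hx; simp [hG, hx.1]
  simp_rw [step]
  rw [sum_pi_prod,
    ← Finset.mul_prod_erase Finset.univ (fun i' => ∑ m, G i' m) (Finset.mem_univ i)]
  have h1 : ∀ x ∈ Finset.univ.erase i, ∑ m, G x m = 1 := by
    intro x hx
    simp only [Finset.mem_erase] at hx
    simp [hG, hx.1, hp x]
  rw [Finset.prod_congr rfl h1, Finset.prod_const_one, mul_one]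
  simp [hG]

lemma bernsteinBasis_nonneg {k j : ℕ} {t : ℝ} (h0 : 0 ≤ t) (h1 : t ≤ 1) :
    0 ≤ bernsteinBasis k j t := by
  have : 0 ≤ 1 - t := by linarith
  unfold bernsteinBasis; positivity

/-- For every continuous function `f` on the closed unit cube `[0,1]^n`, the multivariate
Bernstein polynomials of `f` converge uniformly to `f` on the cube. -/
theorem bernstein_uniform_convergence_unit_cube (n : ℕ) (f : (Fin n → ℝ) → ℝ)
    (hf : ContinuousOn f (Set.Icc (0 : Fin n → ℝ) 1)) :
    Filter.Tendsto
      (fun k : ℕ => ⨆ t : Set.Icc (0 : Fin n → ℝ) 1, |f t - bernsteinCube n k f t|)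
      Filter.atTop (nhds 0) := by
  set S : Set (Fin n → ℝ) := Set.Icc 0 1 with hSdef
  have hScomp : IsCompact S := isCompact_Icc
  have hS0 : (0 : Fin n → ℝ) ∈ S := by
    exact Set.mem_Icc.mpr ⟨le_refl 0, zero_le_one⟩
  obtain ⟨M, hM⟩ := hScomp.exists_bound_of_continuousOn hf
  have hM0 : 0 ≤ M := le_trans (norm_nonneg _) (hM 0 hS0)
  have hUC := hScomp.uniformContinuousOn_of_continuous hf
  rw [Metric.uniformContinuousOn_iff] at hUC
  rw [Metric.tendsto_atTop]
  intro ε hε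
  obtain ⟨δ, hδpos, hδ⟩ := hUC (ε / 3) (by positivity)
  set C : ℝ := 2 * M / δ ^ 2 * n / 4 with hCdef
  have hC0 : 0 ≤ C := by positivity
  -- the key estimate
  have key : ∀ k : ℕ, 0 < k → ∀ t ∈ S, |f t - bernsteinCube n k f t| ≤ ε / 3 + C / k := by
    intro k hk t htS
    have hkR : (0 : ℝ) < k := Nat.cast_pos.mpr hk
    have ht0 : ∀ i, (0 : ℝ) ≤ t i := fun i => (htS.1 : (0 : Fin n → ℝ) ≤ t) i
    have ht1 : ∀ i, t i ≤ 1 := fun i => (htS.2 : t ≤ 1) i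
    set y : (Fin n → Fin (k + 1)) → (Fin n → ℝ) := fun j i => ((j i : ℕ) : ℝ) / k with hy
    set p : Fin n → Fin (k + 1) → ℝ := fun i m => bernsteinBasis k m (t i) with hpdef
    have hp1 : ∀ i, ∑ m, p i m = 1 := fun i => sum_bernsteinBasis k (t i)
    have hpnn : ∀ i m, 0 ≤ p i m := fun i m => bernsteinBasis_nonneg (ht0 i) (ht1 i)
    have hPnn : ∀ j : Fin n → Fin (k + 1), 0 ≤ ∏ i, p i (j i) :=
      fun j => Finset.prod_nonneg fun i _ => hpnn i (j i)
    have sumP : ∑ j : Fin n → Fin (k + 1), ∏ i, p i (j i) = 1 := by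
      rw [sum_pi_prod]; simp [hp1]
    have hyS : ∀ j : Fin n → Fin (k + 1), y j ∈ S := by
      intro j
      constructor
      · intro i
        exact div_nonneg (Nat.cast_nonneg _) hkR.le
      · intro i
        have : ((j i : ℕ) : ℝ) ≤ k := by
          exact_mod_cast Nat.lt_succ_iff.mp (j i).isLt
        exact div_le_one_of_le₀ this hkR.le
    -- pointwise bound
    have ptwise : ∀ j : Fin n → Fin (k + 1),
        |f t - f (y j)| ≤ ε / 3 + (2 * M / δ ^ 2) * ∑ i, (t i - y j i) ^ 2 := by
      intro j
      have hsumnn : 0 ≤ ∑ i, (t i - y j i) ^ 2 :=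
        Finset.sum_nonneg fun i _ => sq_nonneg _
      by_cases hd : dist t (y j) < δ
      · have h1 := hδ t htS (y j) (hyS j) hd
        rw [Real.dist_eq] at h1
        have h2 : 0 ≤ (2 * M / δ ^ 2) * ∑ i, (t i - y j i) ^ 2 := by positivity
        linarith
      · push_neg at hd
        have hex : ∃ i, δ ≤ dist (t i) (y j i) := by
          by_contra hc
          push_neg at hc
          exact absurd ((dist_pi_lt_iff hδpos).mpr hc) (not_lt.mpr hd)
        obtain ⟨i, hi⟩ := hex
        have h1 : δ ^ 2 ≤ (t i - y j i) ^ 2 := by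
          rw [Real.dist_eq] at hi
          calc δ ^ 2 ≤ |t i - y j i| ^ 2 := by
                exact pow_le_pow_left₀ hδpos.le hi 2
            _ = (t i - y j i) ^ 2 := sq_abs _
        have h2 : δ ^ 2 ≤ ∑ i', (t i' - y j i') ^ 2 :=
          le_trans h1 (Finset.single_le_sum (f := fun i' => (t i' - y j i') ^ 2)
            (fun i' _ => sq_nonneg _) (Finset.mem_univ i))
        have h3 : 2 * M ≤ (2 * M / δ ^ 2) * ∑ i', (t i' - y j i') ^ 2 := by
          have hδ2 : (0 : ℝ) < δ ^ 2 := by positivity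
          calc 2 * M = (2 * M / δ ^ 2) * δ ^ 2 := by field_simp
            _ ≤ (2 * M / δ ^ 2) * ∑ i', (t i' - y j i') ^ 2 := by
                apply mul_le_mul_of_nonneg_left h2; positivity
        have h4 : |f t - f (y j)| ≤ 2 * M := by
          calc |f t - f (y j)| ≤ |f t| + |f (y j)| := abs_sub _ _
            _ ≤ M + M := add_le_add (hM t htS) (hM _ (hyS j))
            _ = 2 * M := by ring
        linarith
    -- main computation
    have step1 : f t - bernsteinCube n k f t
        = ∑ j : Fin n → Fin (k + 1), (f t - f (y j)) * ∏ i, p i (j i) := by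
      simp_rw [sub_mul]
      rw [Finset.sum_sub_distrib, ← Finset.mul_sum, sumP, mul_one]
      rfl
    rw [step1]
    calc |∑ j : Fin n → Fin (k + 1), (f t - f (y j)) * ∏ i, p i (j i)|
        ≤ ∑ j : Fin n → Fin (k + 1), |f t - f (y j)| * ∏ i, p i (j i) := by
          refine le_trans (Finset.abs_sum_le_sum_abs _ _) ?_
          apply Finset.sum_le_sum
          intro j _
          rw [abs_mul, abs_of_nonneg (hPnn j)]
      _ ≤ ∑ j : Fin n → Fin (k + 1),
            (ε / 3 + (2 * M / δ ^ 2) * ∑ i, (t i - y j i) ^ 2) * ∏ i, p i (j i) := by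
          apply Finset.sum_le_sum
          intro j _
          exact mul_le_mul_of_nonneg_right (ptwise j) (hPnn j)
      _ = ε / 3 + (2 * M / δ ^ 2) *
            ∑ i, ∑ m : Fin (k + 1), (t i - (m : ℝ) / k) ^ 2 * p i m := by
          simp_rw [add_mul, Finset.sum_add_distrib, ← Finset.mul_sum, sumP, mul_one]
          congr 1
          calc ∑ j : Fin n → Fin (k + 1),
                (2 * M / δ ^ 2 * ∑ i, (t i - y j i) ^ 2) * ∏ i, p i (j i)
              = 2 * M / δ ^ 2 * ∑ j : Fin n → Fin (k + 1),
                  ∑ i, (t i - y j i) ^ 2 * ∏ i', p i' (j i') := by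
                rw [Finset.mul_sum]
                exact Finset.sum_congr rfl fun j _ => by
                  rw [mul_assoc, Finset.sum_mul]
            _ = 2 * M / δ ^ 2 * ∑ i, ∑ j : Fin n → Fin (k + 1),
                  (t i - y j i) ^ 2 * ∏ i', p i' (j i') := by
                rw [Finset.sum_comm]
            _ = 2 * M / δ ^ 2 *
                  ∑ i, ∑ m : Fin (k + 1), (t i - (m : ℝ) / k) ^ 2 * p i m := by
                congr 1
                exact Finset.sum_congr rfl fun i _ =>
                  sum_weighted p (fun i' m => (t i' - (m : ℝ) / k) ^ 2) i hp1
      _ ≤ ε / 3 + C / k := by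
          have hvar : ∀ i, ∑ m : Fin (k + 1), (t i - (m : ℝ) / k) ^ 2 * p i m
              = t i * (1 - t i) / k := fun i => variance_bernsteinBasis hk (t i)
          have hquarter : ∀ i, t i * (1 - t i) / k ≤ 1 / (4 * k) := by
            intro i
            have h14 : t i * (1 - t i) ≤ 1 / 4 := by nlinarith [sq_nonneg (t i - 1 / 2)]
            rw [div_le_div_iff₀ hkR (by positivity)]
            nlinarith
          have hsum : ∑ i, ∑ m : Fin (k + 1), (t i - (m : ℝ) / k) ^ 2 * p i m
              ≤ n * (1 / (4 * k)) := by
            simp_rw [hvar]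
            calc ∑ i, t i * (1 - t i) / k ≤ ∑ _i : Fin n, 1 / (4 * (k:ℝ)) :=
                  Finset.sum_le_sum fun i _ => hquarter i
              _ = n * (1 / (4 * k)) := by
                  rw [Finset.sum_const, Finset.card_univ, Fintype.card_fin, nsmul_eq_mul]
          have hfin : 2 * M / δ ^ 2 *
              (∑ i, ∑ m : Fin (k + 1), (t i - (m : ℝ) / k) ^ 2 * p i m) ≤ C / k := by
            calc 2 * M / δ ^ 2 *
                (∑ i, ∑ m : Fin (k + 1), (t i - (m : ℝ) / k) ^ 2 * p i m)
                ≤ 2 * M / δ ^ 2 * (n * (1 / (4 * k))) :=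
                  mul_le_mul_of_nonneg_left hsum (by positivity)
              _ = C / k := by rw [hCdef]; ring
          linarith
  -- conclude
  obtain ⟨N, hN⟩ := exists_nat_gt (3 * C / ε + 1)
  refine ⟨N, fun k hk => ?_⟩
  have hN1 : (1 : ℝ) ≤ N := by
    have : (0 : ℝ) ≤ 3 * C / ε := by positivity
    linarith
  have hk1 : 0 < k := by
    have : (1 : ℝ) ≤ k := le_trans hN1 (Nat.cast_le.mpr hk)
    exact_mod_cast lt_of_lt_of_le zero_lt_one this
  have hkR : (0 : ℝ) < k := Nat.cast_pos.mpr hk1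
  have hNR : (0 : ℝ) < N := by linarith
  have hCk : C / k < ε / 3 := by
    have h1 : C / (k : ℝ) ≤ C / N :=
      div_le_div_of_nonneg_left hC0 hNR (Nat.cast_le.mpr hk)
    have h2 : C / (N : ℝ) < ε / 3 := by
      rw [div_lt_div_iff₀ hNR (by norm_num : (0:ℝ) < 3)]
      have h3 : ε * (3 * C / ε + 1) = 3 * C + ε := by field_simp
      have h4 := mul_lt_mul_of_pos_left hN hε
      nlinarith
    linarith
  have hsup_le : (⨆ t : S, |f t - bernsteinCube n k f t|) ≤ ε / 3 + C / k :=
    Real.iSup_le (fun ts => key k hk1 ts ts.2) (by positivity)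
  have hsup_nn : 0 ≤ ⨆ t : S, |f t - bernsteinCube n k f t| :=
    Real.iSup_nonneg fun ts => abs_nonneg _
  rw [Real.dist_eq, sub_zero, abs_of_nonneg hsup_nn]
  linarith
end

section
/- Let n ≥ 1, α ∈ (0,1], ϰ > 0, and let f : ℝ^n → ℝ be differentiable with α-Hölder gradient: |∇f(x) - ∇f(y)| ≤ ϰ|x-y|^α for all x, y. Let x_0, x̃ ∈ ℝ^n, let e be a unit vector, let d ≥ 0, and set x = x̃ - d·e. Assume d ≤ |x - x_0|, |x̃ - x_0| ≤ 2|x - x_0|, and that -∇f(x_0)·e = |∇f(x_0)·e|. Then |∇f(x_0)·e| · d ≤ f(x) - f(x̃) + 3ϰ |x - x_0|^{1+α}. -/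
/-! The segment from `x` to `xt = x + d • e` stays within `2‖x - x₀‖` of `x₀` because
`d ≤ ‖x - x₀‖`, so by the Hölder bound the slope `⟪∇f, e⟫` along it exceeds `⟪∇f x₀, e⟫ = -|⟪∇f x₀, e⟫|`
by at most `ϰ (2‖x - x₀‖)^α`. The mean value inequality then gives
`f xt - f x ≤ (-|⟪∇f x₀, e⟫| + ϰ (2‖x - x₀‖)^α) d`, and `2^α d ≤ 2‖x - x₀‖` absorbs the error. -/

open Set
open scoped RealInnerProductSpace

section Gradient

variable {E : Type*} [NormedAddCommGroup E] [InnerProductSpace ℝ E] [CompleteSpace E]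

theorem HasGradientAt.hasDerivAt_comp_add_smul {f : E → ℝ} {f' x e : E} {t : ℝ}
    (h : HasGradientAt f f' (x + t • e)) :
    HasDerivAt (fun s : ℝ => f (x + s • e)) ⟪f', e⟫ t := by
  have hline : HasDerivAt (fun s : ℝ => x + s • e) e t := by
    simpa using ((hasDerivAt_id t).smul_const e).const_add x
  simpa [Function.comp_def] using h.hasFDerivAt.comp_hasDerivAt t hline

theorem sub_le_mul_of_inner_gradient_le {f : E → ℝ} (hf : Differentiable ℝ f) {x e : E}
    {B d : ℝ} (hd : 0 ≤ d) (hB : ∀ t ∈ Ioo 0 d, ⟪gradient f (x + t • e), e⟫ ≤ B) :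
    f (x + d • e) - f x ≤ B * d := by
  have hderiv (t : ℝ) :
      HasDerivAt (fun s : ℝ => f (x + s • e)) ⟪gradient f (x + t • e), e⟫ t :=
    (hf _).hasGradientAt.hasDerivAt_comp_add_smul
  have hmono := (convex_Icc 0 d).image_sub_le_mul_sub_of_deriv_le
    (fun t _ => (hderiv t).continuousAt.continuousWithinAt)
    (fun t _ => (hderiv t).differentiableAt.differentiableWithinAt)
    (fun t ht => (hderiv t).deriv ▸ hB t (by rwa [interior_Icc] at ht))
    0 (left_mem_Icc.2 hd) d (right_mem_Icc.2 hd) hd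
  simpa using hmono

end Gradient

theorem real_inner_le_inner_add_norm_sub {E : Type*} [NormedAddCommGroup E]
    [InnerProductSpace ℝ E] {u v e : E} (he : ‖e‖ ≤ 1) :
    ⟪u, e⟫ ≤ ⟪v, e⟫ + ‖u - v‖ := by
  have hcs : ⟪u - v, e⟫ ≤ ‖u - v‖ * ‖e‖ := real_inner_le_norm _ _
  rw [inner_sub_left] at hcs
  nlinarith [norm_nonneg (u - v)]

theorem Real.two_mul_rpow_mul_le {α R d : ℝ} (hα₀ : 0 ≤ α) (hα₁ : α ≤ 1) (hd : 0 ≤ d)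
    (hdR : d ≤ R) : (2 * R) ^ α * d ≤ 2 * R ^ (1 + α) := by
  have hR : 0 ≤ R := hd.trans hdR
  have htwo : (2 : ℝ) ^ α ≤ 2 := by
    simpa using Real.rpow_le_rpow_of_exponent_le one_le_two hα₁
  calc (2 * R) ^ α * d = 2 ^ α * R ^ α * d := by rw [Real.mul_rpow zero_le_two hR]
    _ ≤ 2 * R ^ α * R := by gcongr
    _ = 2 * R ^ (1 + α) := by
      rw [Real.rpow_add' hR (by positivity), Real.rpow_one]; ring

theorem boundary_normal_derivative_lemma_general (n : ℕ) (α ϰ : ℝ)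
    (hα₀ : 0 < α) (hα₁ : α ≤ 1) (hϰ : 0 < ϰ)
    (f : EuclideanSpace ℝ (Fin n) → ℝ) (hf : Differentiable ℝ f)
    (hHolder : ∀ x y : EuclideanSpace ℝ (Fin n),
      ‖gradient f x - gradient f y‖ ≤ ϰ * ‖x - y‖ ^ α)
    (x₀ xt e : EuclideanSpace ℝ (Fin n)) (he : ‖e‖ = 1) (d : ℝ) (hd : 0 ≤ d)
    (x : EuclideanSpace ℝ (Fin n)) (hx : x = xt - d • e)
    (hdist : d ≤ ‖x - x₀‖)
    (hsign : -⟪gradient f x₀, e⟫ = |⟪gradient f x₀, e⟫|) :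
    |⟪gradient f x₀, e⟫| * d ≤ f x - f xt + 3 * ϰ * ‖x - x₀‖ ^ (1 + α) := by
  set R := ‖x - x₀‖
  set A := ⟪gradient f x₀, e⟫
  have hslope : ∀ t ∈ Ioo 0 d, ⟪gradient f (x + t • e), e⟫ ≤ A + ϰ * (2 * R) ^ α := by
    intro t ht
    have hnear : ‖x + t • e - x₀‖ ≤ 2 * R := calc
      ‖x + t • e - x₀‖ = ‖(x - x₀) + t • e‖ := by rw [sub_add_eq_add_sub]
      _ ≤ R + t := by
        simpa [norm_smul, he, abs_of_pos ht.1] using norm_add_le (x - x₀) (t • e)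
      _ ≤ 2 * R := by linarith [ht.2]
    calc ⟪gradient f (x + t • e), e⟫
        ≤ A + ‖gradient f (x + t • e) - gradient f x₀‖ :=
          real_inner_le_inner_add_norm_sub he.le
      _ ≤ A + ϰ * ‖x + t • e - x₀‖ ^ α := by gcongr; exact hHolder _ _
      _ ≤ A + ϰ * (2 * R) ^ α := by gcongr
  have hxt : x + d • e = xt := by rw [hx, sub_add_cancel]
  have hincr : f xt - f x ≤ (A + ϰ * (2 * R) ^ α) * d :=
    hxt ▸ sub_le_mul_of_inner_gradient_le hf hd hslope
  have herr := mul_le_mul_of_nonneg_left (Real.two_mul_rpow_mul_le hα₀.le hα₁ hd hdist) hϰ.le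
  have hR : 0 ≤ ϰ * R ^ (1 + α) := by positivity
  rw [← hsign]
  nlinarith

/-- Euclidean form of the boundary lemma: if `f` is differentiable with `α`-Hölder gradient
(constant `ϰ`), `e` is a unit vector, `x = xt - d e` with `d ≥ 0`, `d ≤ |x - x₀|`,
`|xt - x₀| ≤ 2|x - x₀|` and `-∇f(x₀)·e = |∇f(x₀)·e|`, then
`|∇f(x₀)·e| d ≤ f(x) - f(xt) + 3ϰ|x - x₀|^{1+α}`. -/
theorem boundary_normal_derivative_lemma (n : ℕ) (hn : 1 ≤ n) (α ϰ : ℝ)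
    (hα₀ : 0 < α) (hα₁ : α ≤ 1) (hϰ : 0 < ϰ)
    (f : EuclideanSpace ℝ (Fin n) → ℝ) (hf : Differentiable ℝ f)
    (hHolder : ∀ x y : EuclideanSpace ℝ (Fin n),
      ‖gradient f x - gradient f y‖ ≤ ϰ * ‖x - y‖ ^ α)
    (x₀ xt e : EuclideanSpace ℝ (Fin n)) (he : ‖e‖ = 1) (d : ℝ) (hd : 0 ≤ d)
    (x : EuclideanSpace ℝ (Fin n)) (hx : x = xt - d • e)
    (hdist : d ≤ ‖x - x₀‖) (htilde : ‖xt - x₀‖ ≤ 2 * ‖x - x₀‖)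
    (hsign : -⟪gradient f x₀, e⟫ = |⟪gradient f x₀, e⟫|) :
    |⟪gradient f x₀, e⟫| * d ≤ f x - f xt + 3 * ϰ * ‖x - x₀‖ ^ (1 + α) :=
  boundary_normal_derivative_lemma_general n α ϰ hα₀ hα₁ hϰ f hf hHolder x₀ xt e he d hd x hx hdist
    hsign
end

section
/- Let n ≥ 1, ℓ ≥ 2 an integer, α ∈ (0,1], ϰ > 0, and let f : ℝ^n → ℝ be ℓ times continuously differentiable with ‖D^ℓ f(x) - D^ℓ f(y)‖ ≤ ϰ|x-y|^α for all x, y, where D^ℓ f is the ℓ-th Fréchet derivative and ‖·‖ its operator norm. Let x_0, x̃ ∈ ℝ^n, let e be a unit vector, let d ≥ 0, and set x = x̃ - d·e. Assume d ≤ |x - x_0|, |x̃ - x_0| ≤ 2|x - x_0|, and that (-1)^ℓ ∂_e^ℓ f(x_0) = |∂_e^ℓ f(x_0)|, where ∂_e^j f denotes the j-th directional derivative of f along e. Then |∂_e^ℓ f(x_0)| · d^ℓ / ℓ! ≤ f(x) - f(x̃) + Σ_{j=1}^{ℓ-1} (-1)^{j+1} ∂_e^j f(x̃) · d^j / j! +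 3ϰ |x - x_0|^{ℓ+α}. -/
/-- The `j`-th iterated directional derivative of `f` along `e` at `y`,
`∂_e^j f(y) = D^j f(y)(e,…,e)`. -/
noncomputable def dirDeriv {n : ℕ} (j : ℕ) (f : EuclideanSpace ℝ (Fin n) → ℝ)
    (e y : EuclideanSpace ℝ (Fin n)) : ℝ :=
  iteratedFDeriv ℝ j f y (fun _ => e)

/-!
Restrict `f` to the line `s ↦ xt - s • e`, whose `k`-th derivative is `(-1)^k ∂_e^k f`. Taylor's
theorem with Lagrange remainder on `[0, d]` identifies `f x - f xt + Σ …` with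
`(-1)^ℓ ∂_e^ℓ f(z) d^ℓ/ℓ!` for a point `z` of the segment `[x, xt]`. As
`|z - x₀| ≤ |xt - x₀| + d ≤ 3|x - x₀|`, the Hölder bound gives
`|∂_e^ℓ f(z) - ∂_e^ℓ f(x₀)| ≤ ϰ 3^α |x - x₀|^α ≤ 3ϰ|x - x₀|^α`; by the sign hypothesis
`(-1)^ℓ ∂_e^ℓ f(z) ≥ |∂_e^ℓ f(x₀)| - 3ϰ|x - x₀|^α`, and `d^ℓ/ℓ! ≤ |x - x₀|^ℓ` absorbs the error.
-/

open Set
open scoped Nat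

theorem exists_taylor_lagrange_of_contDiff {g : ℝ → ℝ} {n : ℕ} (hn : n ≠ 0)
    (hg : ContDiff ℝ n g) {a b : ℝ} (hab : a ≤ b) :
    ∃ c ∈ Icc a b, g b = ∑ k ∈ Finset.range n, iteratedDeriv k g a * (b - a) ^ k / k ! +
      iteratedDeriv n g c * (b - a) ^ n / n ! := by
  obtain ⟨m, rfl⟩ : ∃ m, n = m + 1 := ⟨n - 1, by omega⟩
  rcases hab.eq_or_lt with rfl | hlt
  · exact ⟨a, left_mem_Icc.2 le_rfl, by simp [Finset.sum_range_succ']⟩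
  obtain ⟨c, hc, htaylor⟩ := taylor_mean_remainder_lagrange_iteratedDeriv hlt.ne hg.contDiffOn
  rw [uIoo_of_lt hlt] at hc
  refine ⟨c, Ioo_subset_Icc_self hc, ?_⟩
  have hcoeff : ∀ k ∈ Finset.range (m + 1),
      ((k ! : ℝ)⁻¹ * (b - a) ^ k) • iteratedDerivWithin k g (uIcc a b) a =
        iteratedDeriv k g a * (b - a) ^ k / k ! := by
    intro k hk
    rw [uIcc_of_le hab, iteratedDerivWithin_eq_iteratedDeriv (uniqueDiffOn_Icc hlt)
      (hg.of_le (by exact_mod_cast (Finset.mem_range.1 hk).le)).contDiffAt (left_mem_Icc.2 hab),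
      smul_eq_mul]
    ring
  rw [taylor_within_apply, Finset.sum_congr rfl hcoeff] at htaylor
  linarith

theorem iteratedDeriv_comp_add_smul {E F : Type*} [NormedAddCommGroup E] [NormedSpace ℝ E]
    [NormedAddCommGroup F] [NormedSpace ℝ F] {N : WithTop ℕ∞} {f : E → F} (hf : ContDiff ℝ N f)
    (p v : E) {j : ℕ} (hj : j ≤ N) (t : ℝ) :
    iteratedDeriv j (fun s : ℝ => f (p + s • v)) t =
      iteratedFDeriv ℝ j f (p + t • v) (fun _ => v) := by
  have hcomp : (fun s : ℝ => f (p + s • v)) =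
      (fun z => f (p + z)) ∘ ContinuousLinearMap.toSpanSingleton ℝ v := rfl
  rw [iteratedDeriv_eq_iteratedFDeriv, hcomp, ContinuousLinearMap.iteratedFDeriv_comp_right
    (f := fun z => f (p + z)) _ (hf.comp (contDiff_const.add contDiff_id)) t hj]
  simp [iteratedFDeriv_comp_add_left]

theorem dirDeriv_neg {n : ℕ} (j : ℕ) (f : EuclideanSpace ℝ (Fin n) → ℝ)
    (e y : EuclideanSpace ℝ (Fin n)) : dirDeriv j f (-e) y = (-1) ^ j * dirDeriv j f e y := by
  have h := (iteratedFDeriv ℝ j f y).map_smul_univ (fun _ => (-1 : ℝ)) (fun _ => e)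
  simpa [dirDeriv, Finset.prod_const] using h

theorem sum_range_neg_one_pow_mul {ℓ : ℕ} (hℓ : ℓ ≠ 0) (a : ℕ → ℝ) :
    ∑ k ∈ Finset.range ℓ, (-1) ^ k * a k =
      a 0 - ∑ j ∈ Finset.Icc 1 (ℓ - 1), (-1) ^ (j + 1) * a j := by
  have hIcc : Finset.Icc 1 (ℓ - 1) = Finset.Ico 1 ℓ := by
    ext; simp only [Finset.mem_Icc, Finset.mem_Ico]; omega
  rw [hIcc, Finset.range_eq_Ico, Finset.sum_eq_sum_Ico_succ_bot (Nat.pos_of_ne_zero hℓ),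
    sub_eq_add_neg, ← Finset.sum_neg_distrib, pow_zero, one_mul]
  congr 1
  exact Finset.sum_congr rfl fun k _ => by ring

theorem exists_dirDeriv_taylor {n ℓ : ℕ} (hℓ : ℓ ≠ 0) {f : EuclideanSpace ℝ (Fin n) → ℝ}
    (hf : ContDiff ℝ ℓ f) (xt e : EuclideanSpace ℝ (Fin n)) {d : ℝ} (hd : 0 ≤ d) :
    ∃ c ∈ Icc 0 d, f (xt - d • e) - f xt +
        ∑ j ∈ Finset.Icc 1 (ℓ - 1), (-1 : ℝ) ^ (j + 1) * dirDeriv j f e xt * d ^ j / j ! =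
      (-1) ^ ℓ * dirDeriv ℓ f e (xt - c • e) * d ^ ℓ / ℓ ! := by
  set g : ℝ → ℝ := fun s => f (xt + s • -e)
  have hg : ContDiff ℝ ℓ g := hf.comp (contDiff_const.add (contDiff_id.smul contDiff_const))
  have hderiv : ∀ k ≤ ℓ, ∀ s, iteratedDeriv k g s = (-1) ^ k * dirDeriv k f e (xt - s • e) := by
    intro k hk s
    rw [iteratedDeriv_comp_add_smul hf xt (-e) (by exact_mod_cast hk), smul_neg,
      ← sub_eq_add_neg]
    exact dirDeriv_neg k f e _
  obtain ⟨c, hc, htaylor⟩ := exists_taylor_lagrange_of_contDiff hℓ hg hd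
  refine ⟨c, hc, ?_⟩
  have hpoly : ∑ k ∈ Finset.range ℓ, iteratedDeriv k g 0 * (d - 0) ^ k / k ! =
      f xt - ∑ j ∈ Finset.Icc 1 (ℓ - 1), (-1 : ℝ) ^ (j + 1) * dirDeriv j f e xt * d ^ j / j ! :=
    calc _ = ∑ k ∈ Finset.range ℓ, (-1) ^ k * (dirDeriv k f e xt * d ^ k / k !) :=
          Finset.sum_congr rfl fun k hk => by
            rw [hderiv k (Finset.mem_range.1 hk).le, zero_smul, sub_zero, sub_zero]; ring
      _ = f xt - ∑ j ∈ Finset.Icc 1 (ℓ - 1),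
            (-1) ^ (j + 1) * (dirDeriv j f e xt * d ^ j / j !) := by
          rw [sum_range_neg_one_pow_mul hℓ]; simp [dirDeriv]
      _ = _ := by simp only [mul_div_assoc, mul_assoc]
  have hgd : g d = f (xt - d • e) := by simp only [g, smul_neg, ← sub_eq_add_neg]
  rw [hderiv ℓ le_rfl, hpoly, hgd, sub_zero] at htaylor
  linarith

theorem abs_dirDeriv_sub_le {n : ℕ} (j : ℕ) (f : EuclideanSpace ℝ (Fin n) → ℝ)
    (e y z : EuclideanSpace ℝ (Fin n)) :
    |dirDeriv j f e y - dirDeriv j f e z| ≤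
      ‖iteratedFDeriv ℝ j f y - iteratedFDeriv ℝ j f z‖ * ‖e‖ ^ j := by
  simpa [dirDeriv, Finset.prod_const] using
    (iteratedFDeriv ℝ j f y - iteratedFDeriv ℝ j f z).le_opNorm fun _ => e

theorem abs_dirDeriv_sub_le_of_holder {n ℓ : ℕ} {α ϰ c r : ℝ} (hα₀ : 0 ≤ α) (hα₁ : α ≤ 1)
    (hϰ : 0 ≤ ϰ) (hc : 1 ≤ c) {f : EuclideanSpace ℝ (Fin n) → ℝ}
    (hHolder : ∀ x y : EuclideanSpace ℝ (Fin n),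
      ‖iteratedFDeriv ℝ ℓ f x - iteratedFDeriv ℝ ℓ f y‖ ≤ ϰ * ‖x - y‖ ^ α)
    {e y z : EuclideanSpace ℝ (Fin n)} (he : ‖e‖ = 1) (hyz : ‖y - z‖ ≤ c * r) :
    |dirDeriv ℓ f e y - dirDeriv ℓ f e z| ≤ c * ϰ * r ^ α := by
  have hr : 0 ≤ r := nonneg_of_mul_nonneg_right ((norm_nonneg _).trans hyz) (by linarith)
  calc _ ≤ ‖iteratedFDeriv ℝ ℓ f y - iteratedFDeriv ℝ ℓ f z‖ := by
        simpa [he] using abs_dirDeriv_sub_le ℓ f e y z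
    _ ≤ ϰ * ‖y - z‖ ^ α := hHolder y z
    _ ≤ ϰ * (c * r) ^ α := by gcongr
    _ ≤ ϰ * (c * r ^ α) := by
        rw [Real.mul_rpow (by linarith) hr]
        gcongr
        exact Real.rpow_le_self_of_one_le hc hα₁
    _ = c * ϰ * r ^ α := by ring

theorem abs_le_neg_one_pow_mul_add_abs_sub {a b : ℝ} {ℓ : ℕ} (ha : (-1) ^ ℓ * a = |a|) :
    |a| ≤ (-1) ^ ℓ * b + |a - b| := by
  have h := le_abs_self ((-1) ^ ℓ * (a - b))
  rw [abs_mul, abs_pow, abs_neg, abs_one, one_pow, one_mul] at h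
  linarith [mul_sub ((-1 : ℝ) ^ ℓ) a b]

theorem boundary_higher_order_lemma_general (n : ℕ) (ℓ : ℕ) (hℓ : 2 ≤ ℓ) (α ϰ : ℝ)
    (hα₀ : 0 < α) (hα₁ : α ≤ 1) (hϰ : 0 < ϰ)
    (f : EuclideanSpace ℝ (Fin n) → ℝ) (hf : ContDiff ℝ ℓ f)
    (hHolder : ∀ x y : EuclideanSpace ℝ (Fin n),
      ‖iteratedFDeriv ℝ ℓ f x - iteratedFDeriv ℝ ℓ f y‖ ≤ ϰ * ‖x - y‖ ^ α)
    (x₀ xt e : EuclideanSpace ℝ (Fin n)) (he : ‖e‖ = 1) (d : ℝ) (hd : 0 ≤ d)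
    (x : EuclideanSpace ℝ (Fin n)) (hx : x = xt - d • e)
    (hdist : d ≤ ‖x - x₀‖) (htilde : ‖xt - x₀‖ ≤ 2 * ‖x - x₀‖)
    (hsign : (-1 : ℝ) ^ ℓ * dirDeriv ℓ f e x₀ = |dirDeriv ℓ f e x₀|) :
    |dirDeriv ℓ f e x₀| * d ^ ℓ / (ℓ.factorial : ℝ) ≤
      f x - f xt +
        (∑ j ∈ Finset.Icc 1 (ℓ - 1),
          (-1 : ℝ) ^ (j + 1) * dirDeriv j f e xt * d ^ j / (j.factorial : ℝ)) +
        3 * ϰ * ‖x - x₀‖ ^ ((ℓ : ℝ) + α) := by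
  obtain ⟨c, hc, htaylor⟩ := exists_dirDeriv_taylor (by omega) hf xt e hd
  rw [← hx] at htaylor
  rw [htaylor]
  set h := ‖x - x₀‖
  set z := xt - c • e
  have hz : ‖x₀ - z‖ ≤ 3 * h :=
    calc ‖x₀ - z‖ = ‖(xt - x₀) - c • e‖ := by rw [norm_sub_rev, sub_right_comm]
      _ ≤ ‖xt - x₀‖ + ‖c • e‖ := norm_sub_le _ _
      _ = ‖xt - x₀‖ + c := by rw [norm_smul, he, Real.norm_of_nonneg hc.1, mul_one]
      _ ≤ 3 * h := by linarith [hc.2]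
  have hholder := abs_dirDeriv_sub_le_of_holder hα₀.le hα₁ hϰ.le (by norm_num) hHolder he hz
  have hdh : d ^ ℓ / ℓ ! ≤ h ^ ℓ :=
    (div_le_self (by positivity) (by exact_mod_cast ℓ.factorial_pos)).trans
      (pow_le_pow_left₀ hd hdist ℓ)
  rw [Real.rpow_add' (norm_nonneg _) (by positivity), Real.rpow_natCast]
  calc |dirDeriv ℓ f e x₀| * d ^ ℓ / ℓ !
      ≤ ((-1) ^ ℓ * dirDeriv ℓ f e z + |dirDeriv ℓ f e x₀ - dirDeriv ℓ f e z|) * (d ^ ℓ / ℓ !) := by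
        rw [mul_div_assoc]
        gcongr
        exact abs_le_neg_one_pow_mul_add_abs_sub hsign
    _ ≤ (-1) ^ ℓ * dirDeriv ℓ f e z * (d ^ ℓ / ℓ !) + 3 * ϰ * h ^ α * h ^ ℓ := by
        rw [add_mul]
        gcongr
    _ = _ := by ring

/-- Euclidean form of the higher-order boundary lemma: if `f` is `ℓ` times continuously
differentiable with `α`-Hölder `ℓ`-th derivative (constant `ϰ`), `e` is a unit vector,
`x = xt - d e` with `d ≥ 0`, `d ≤ |x - x₀|`, `|xt - x₀| ≤ 2|x - x₀|` and
`(-1)^ℓ ∂_e^ℓ f(x₀) = |∂_e^ℓ f(x₀)|`, then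
`|∂_e^ℓ f(x₀)| d^ℓ/ℓ! ≤ f(x) - f(xt) + Σ_{j=1}^{ℓ-1} (-1)^{j+1} ∂_e^j f(xt) d^j/j!
  + 3ϰ|x - x₀|^{ℓ+α}`. -/
theorem boundary_higher_order_lemma (n : ℕ) (hn : 1 ≤ n) (ℓ : ℕ) (hℓ : 2 ≤ ℓ) (α ϰ : ℝ)
    (hα₀ : 0 < α) (hα₁ : α ≤ 1) (hϰ : 0 < ϰ)
    (f : EuclideanSpace ℝ (Fin n) → ℝ) (hf : ContDiff ℝ ℓ f)
    (hHolder : ∀ x y : EuclideanSpace ℝ (Fin n),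
      ‖iteratedFDeriv ℝ ℓ f x - iteratedFDeriv ℝ ℓ f y‖ ≤ ϰ * ‖x - y‖ ^ α)
    (x₀ xt e : EuclideanSpace ℝ (Fin n)) (he : ‖e‖ = 1) (d : ℝ) (hd : 0 ≤ d)
    (x : EuclideanSpace ℝ (Fin n)) (hx : x = xt - d • e)
    (hdist : d ≤ ‖x - x₀‖) (htilde : ‖xt - x₀‖ ≤ 2 * ‖x - x₀‖)
    (hsign : (-1 : ℝ) ^ ℓ * dirDeriv ℓ f e x₀ = |dirDeriv ℓ f e x₀|) :
    |dirDeriv ℓ f e x₀| * d ^ ℓ / (ℓ.factorial : ℝ) ≤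
      f x - f xt +
        (∑ j ∈ Finset.Icc 1 (ℓ - 1),
          (-1 : ℝ) ^ (j + 1) * dirDeriv j f e xt * d ^ j / (j.factorial : ℝ)) +
        3 * ϰ * ‖x - x₀‖ ^ ((ℓ : ℝ) + α) :=
  boundary_higher_order_lemma_general n ℓ hℓ α ϰ hα₀ hα₁ hϰ f hf hHolder x₀ xt e he d hd x hx hdist
    htilde hsign
end

section
/- Let X be a reflexive Banach space, Y a normed space, and Z a Banach space. Let A : X → Y and T : X → Z be bounded linear operators with T compact. Assume that there exists c > 0 such that ‖x‖_X ≤ c(‖Ax‖_Y + ‖Tx‖_Z) for all x ∈ X, and that A is injective. Then there exists m > 0 such that for every x ∈ X with ‖Tx‖_Z = 1 one has ‖Ax‖_Y ≥ m. -/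
/-- Abstract form of the Appendix B lemma: let `X` be a reflexive Banach space (the canonical
embedding into the bidual is surjective), `Y` a normed space, `Z` a Banach space, `A : X → Y`
and `T : X → Z` bounded linear operators with `T` compact. If `‖x‖ ≤ c(‖Ax‖ + ‖Tx‖)` for all
`x` (for some `c > 0`) and `A` is injective, then there is `m > 0` such that `‖Ax‖ ≥ m`
whenever `‖Tx‖ = 1`. -/
theorem norm_lower_bound_of_compact_perturbation
    (X Y Z : Type*) [NormedAddCommGroup X] [NormedSpace ℝ X] [CompleteSpace X]
    [NormedAddCommGroup Y] [NormedSpace ℝ Y]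
    [NormedAddCommGroup Z] [NormedSpace ℝ Z] [CompleteSpace Z]
    (hrefl : Function.Surjective ⇑(NormedSpace.inclusionInDoubleDual ℝ X))
    (A : X →L[ℝ] Y) (T : X →L[ℝ] Z) (hT : IsCompactOperator ⇑T)
    (c : ℝ) (hc : 0 < c) (hbound : ∀ x : X, ‖x‖ ≤ c * (‖A x‖ + ‖T x‖))
    (hinj : Function.Injective ⇑A) :
    ∃ m : ℝ, 0 < m ∧ ∀ x : X, ‖T x‖ = 1 → m ≤ ‖A x‖ := by
  by_contra h
  push_neg at h
  -- extract a sequence with ‖T xₙ‖ = 1 and ‖A xₙ‖ < 1/(n+1)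
  have hseq : ∀ n : ℕ, ∃ x : X, ‖T x‖ = 1 ∧ ‖A x‖ < 1 / (n + 1) := by
    intro n
    obtain ⟨x, hx1, hx2⟩ := h (1 / (n + 1)) (by positivity)
    exact ⟨x, hx1, hx2⟩
  choose x hx1 hx2 using hseq
  -- the sequence is bounded by 2c
  have hxb : ∀ n, x n ∈ Metric.closedBall (0 : X) (2 * c) := by
    intro n
    rw [Metric.mem_closedBall, dist_zero_right]
    calc ‖x n‖ ≤ c * (‖A (x n)‖ + ‖T (x n)‖) := hbound _
      _ ≤ c * (1 + 1) := by
          have h1 : ‖A (x n)‖ ≤ 1 := by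
            have := hx2 n
            have : ‖A (x n)‖ < 1 / (n + 1) := this
            have hle : (1 : ℝ) / (n + 1) ≤ 1 := by
              rw [div_le_one (by positivity)]
              linarith [Nat.cast_nonneg (α := ℝ) n]
            linarith
          have h2 : ‖T (x n)‖ ≤ 1 := le_of_eq (hx1 n)
          nlinarith [hc.le]
      _ = 2 * c := by ring
  -- T maps this into a compact set
  have hT' : IsCompactOperator ⇑(T : X →ₗ[ℝ] Z) := hT
  have hK : IsCompact (closure (⇑(T : X →ₗ[ℝ] Z) '' Metric.closedBall 0 (2 * c))) :=
    hT'.isCompact_closure_image_closedBall (2 * c)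
  have hmem : ∀ n, T (x n) ∈ closure (⇑(T : X →ₗ[ℝ] Z) '' Metric.closedBall (0 : X) (2 * c)) := fun n =>
    subset_closure ⟨x n, hxb n, rfl⟩
  obtain ⟨z, _, φ, hφ, hz⟩ := hK.tendsto_subseq hmem
  -- A (x n) → 0
  have hA0 : Filter.Tendsto (fun n => A (x n)) Filter.atTop (nhds 0) := by
    rw [tendsto_zero_iff_norm_tendsto_zero]
    have : Filter.Tendsto (fun n : ℕ => 1 / ((n : ℝ) + 1)) Filter.atTop (nhds 0) :=
      tendsto_one_div_add_atTop_nhds_zero_nat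
    exact squeeze_zero (fun n => norm_nonneg _) (fun n => (hx2 n).le) this
  have hA0' : Filter.Tendsto (fun n => A (x (φ n))) Filter.atTop (nhds 0) :=
    hA0.comp hφ.tendsto_atTop
  -- x ∘ φ is Cauchy
  have hACauchy : CauchySeq (fun n => A (x (φ n))) := hA0'.cauchySeq
  have hTCauchy : CauchySeq (fun n => T (x (φ n))) := hz.cauchySeq
  have hCauchy : CauchySeq (fun n => x (φ n)) := by
    rw [Metric.cauchySeq_iff] at hACauchy hTCauchy ⊢
    intro ε hε
    obtain ⟨N₁, hN₁⟩ := hACauchy (ε / (2 * c)) (by positivity)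
    obtain ⟨N₂, hN₂⟩ := hTCauchy (ε / (2 * c)) (by positivity)
    refine ⟨max N₁ N₂, fun m hm n hn => ?_⟩
    have h1 := hN₁ m (le_of_max_le_left hm) n (le_of_max_le_left hn)
    have h2 := hN₂ m (le_of_max_le_right hm) n (le_of_max_le_right hn)
    rw [dist_eq_norm] at h1 h2 ⊢
    have key := hbound (x (φ m) - x (φ n))
    rw [map_sub, map_sub] at key
    calc ‖x (φ m) - x (φ n)‖ ≤ c * (‖A (x (φ m)) - A (x (φ n))‖ + ‖T (x (φ m)) - T (x (φ n))‖) := key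
      _ < c * (ε / (2 * c) + ε / (2 * c)) := by
          apply mul_lt_mul_of_pos_left _ hc
          exact add_lt_add h1 h2
      _ = ε := by field_simp; ring
  obtain ⟨u, hu⟩ := cauchySeq_tendsto_of_complete hCauchy
  -- T u = z, A u = 0
  have hTu : T u = z := tendsto_nhds_unique ((T.continuous.tendsto u).comp hu) hz
  have hAu : A u = 0 := tendsto_nhds_unique ((A.continuous.tendsto u).comp hu) hA0'
  have hu0 : u = 0 := hinj (by rw [hAu, map_zero])
  have : ‖T u‖ = 1 := by
    have : Filter.Tendsto (fun n => ‖T (x (φ n))‖) Filter.atTop (nhds ‖z‖) := hz.norm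
    have h1 : Filter.Tendsto (fun _ : ℕ => (1 : ℝ)) Filter.atTop (nhds ‖z‖) := by
      convert this using 2 with n
      exact (hx1 (φ n)).symm
    have := tendsto_nhds_unique h1 tendsto_const_nhds
    rw [hTu, ← this]
  rw [hu0, map_zero, norm_zero] at this
  norm_num at this
end

section
/- Let O be an open subset of ℝ^n and let σ_1, σ_2 : O → ℝ be twice continuously differentiable with σ_1 > 0 and σ_2 > 0 on O. Define a = (σ_1 σ_2)^{1/2}, w = ln(σ_1/σ_2), and q_j = Δ(σ_j^{1/2}) / σ_j^{1/2} for j = 1, 2. Then the identity div(a ∇w) = 2a(q_1 - q_2) holds pointwise on O. -/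
/-!
Write `uⱼ = √σⱼ`. Then `a = u₁u₂` and `∇w = 2(∇u₁/u₁ - ∇u₂/u₂)`, so `a∇w = 2(u₂∇u₁ - u₁∇u₂)`.
The divergence of `u₂∇u₁ - u₁∇u₂` is `u₂Δu₁ - u₁Δu₂`, the cross terms `⟪∇u₂, ∇u₁⟫` cancelling
(Green's second identity in differential form), and this equals `u₁u₂(Δu₁/u₁ - Δu₂/u₂)`.
-/

/-- The divergence of a vector field `F : ℝⁿ → ℝⁿ`: `div F (x) = Σᵢ ∂ᵢFᵢ(x)`. -/
noncomputable def ediv {n : ℕ} (F : EuclideanSpace ℝ (Fin n) → EuclideanSpace ℝ (Fin n))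
    (x : EuclideanSpace ℝ (Fin n)) : ℝ :=
  ∑ i, fderiv ℝ F x (EuclideanSpace.single i 1) i

/-- The Laplacian of `f : ℝⁿ → ℝ`: `Δf = div(∇f)`. -/
noncomputable def lap {n : ℕ} (f : EuclideanSpace ℝ (Fin n) → ℝ)
    (x : EuclideanSpace ℝ (Fin n)) : ℝ :=
  ediv (gradient f) x

open Real InnerProductSpace Topology Gradient

section Gradient

variable {F : Type*} [NormedAddCommGroup F] [InnerProductSpace ℝ F] [CompleteSpace F]
  {f g : F → ℝ} {x : F}

theorem HasFDerivAt.gradient_eq {f' : StrongDual ℝ F} (h : HasFDerivAt f f' x) :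
    ∇ f x = (toDual ℝ F).symm f' :=
  (hasFDerivAt_iff_hasGradientAt.mp h).gradient

theorem gradient_sqrt (hf : DifferentiableAt ℝ f x) (hx : f x ≠ 0) :
    ∇ (fun y => √(f y)) x = (2 * √(f x))⁻¹ • ∇ f x := by
  rw [(hf.hasFDerivAt.sqrt hx).gradient_eq, one_div, map_smul]
  rfl

theorem gradient_log_div (hf : DifferentiableAt ℝ f x) (hg : DifferentiableAt ℝ g x)
    (hfx : f x ≠ 0) (hgx : g x ≠ 0) :
    ∇ (fun y => log (f y / g y)) x = (f x)⁻¹ • ∇ f x - (g x)⁻¹ • ∇ g x := by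
  have hlog : (fun y => log (f y / g y)) =ᶠ[𝓝 x] (fun y => log (f y)) - fun y => log (g y) := by
    filter_upwards [hf.continuousAt.eventually_ne hfx, hg.continuousAt.eventually_ne hgx]
      with y hfy hgy using log_div hfy hgy
  rw [hlog.gradient_eq, ((hf.hasFDerivAt.log hfx).sub (hg.hasFDerivAt.log hgx)).gradient_eq,
    map_sub, map_smul, map_smul]
  rfl

theorem ContDiffAt.differentiableAt_gradient (hf : ContDiffAt ℝ 2 f x) :
    DifferentiableAt ℝ (∇ f) x :=
  (toDual ℝ F).symm.differentiableAt.comp x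
    ((hf.fderiv_right one_add_one_eq_two.le).differentiableAt one_ne_zero)

theorem sqrt_mul_smul_gradient_log_div (hf : DifferentiableAt ℝ f x)
    (hg : DifferentiableAt ℝ g x) (hfx : 0 < f x) (hgx : 0 < g x) :
    √(f x * g x) • ∇ (fun y => log (f y / g y)) x
      = (2 : ℝ) • (√(g x) • ∇ (fun y => √(f y)) x - √(f x) • ∇ (fun y => √(g y)) x) := by
  rw [gradient_log_div hf hg hfx.ne' hgx.ne', gradient_sqrt hf hfx.ne', gradient_sqrt hg hgx.ne',
    sqrt_mul hfx.le]
  have hf' : √(f x) ^ 2 = f x := sq_sqrt hfx.le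
  have hg' : √(g x) ^ 2 = g x := sq_sqrt hgx.le
  have hf_pos := sqrt_pos.mpr hfx
  have hg_pos := sqrt_pos.mpr hgx
  simp only [smul_sub, smul_smul]
  congr 2
  · field_simp
    linear_combination hf'
  · field_simp
    linear_combination hg'

end Gradient

section Divergence

variable {n : ℕ} {c : EuclideanSpace ℝ (Fin n) → ℝ}
  {V W : EuclideanSpace ℝ (Fin n) → EuclideanSpace ℝ (Fin n)} {x : EuclideanSpace ℝ (Fin n)}

theorem ediv_congr_of_eventuallyEq (h : V =ᶠ[𝓝 x] W) : ediv V x = ediv W x := by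
  simp only [ediv, h.fderiv_eq]

theorem ediv_const_smul (a : ℝ) : ediv (fun y => a • V y) x = a * ediv V x := by
  simp only [ediv, ← Pi.smul_def, fderiv_const_smul_field, Finset.mul_sum]
  rfl

theorem ediv_sub (hV : DifferentiableAt ℝ V x) (hW : DifferentiableAt ℝ W x) :
    ediv (fun y => V y - W y) x = ediv V x - ediv W x := by
  simp [ediv, fderiv_fun_sub hV hW, Finset.sum_sub_distrib]

theorem ediv_smul (hc : DifferentiableAt ℝ c x) (hV : DifferentiableAt ℝ V x) :
    ediv (fun y => c y • V y) x = fderiv ℝ c x (V x) + c x * ediv V x := by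
  have hcV : ∑ i, fderiv ℝ c x (EuclideanSpace.single i 1) * V x i = fderiv ℝ c x (V x) := by
    conv_rhs => rw [← (EuclideanSpace.basisFun (Fin n) ℝ).sum_repr (V x)]
    simp [mul_comm]
  simp [ediv, fderiv_fun_smul hc hV, Finset.sum_add_distrib, Finset.mul_sum, hcV, add_comm]

theorem ediv_smul_gradient_sub_smul_gradient {u v : EuclideanSpace ℝ (Fin n) → ℝ}
    (hu : DifferentiableAt ℝ u x) (hv : DifferentiableAt ℝ v x)
    (hu' : DifferentiableAt ℝ (∇ u) x) (hv' : DifferentiableAt ℝ (∇ v) x) :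
    ediv (fun y => u y • ∇ v y - v y • ∇ u y) x = u x * lap v x - v x * lap u x := by
  rw [ediv_sub (V := fun y => u y • ∇ v y) (W := fun y => v y • ∇ u y) (hu.smul hv')
      (hv.smul hu'), ediv_smul hu hv', ediv_smul hv hu',
    ← inner_gradient_left, ← inner_gradient_left, real_inner_comm]
  unfold lap
  ring

end Divergence

/-- With `a = √(σ₁σ₂)`, `w = ln(σ₁/σ₂)` and `q_j = Δ(√σ_j)/√σ_j`, the identity
`div(a ∇w) = 2a(q₁ - q₂)` holds pointwise on the open set `O` where `σ₁, σ₂` are positive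
and `C²`. -/
theorem div_a_grad_w_identity (n : ℕ) (O : Set (EuclideanSpace ℝ (Fin n))) (hO : IsOpen O)
    (σ₁ σ₂ : EuclideanSpace ℝ (Fin n) → ℝ)
    (hσ₁ : ContDiffOn ℝ 2 σ₁ O) (hσ₂ : ContDiffOn ℝ 2 σ₂ O)
    (hpos₁ : ∀ x ∈ O, 0 < σ₁ x) (hpos₂ : ∀ x ∈ O, 0 < σ₂ x) :
    ∀ x ∈ O,
      ediv (fun y => Real.sqrt (σ₁ y * σ₂ y) •
          gradient (fun z => Real.log (σ₁ z / σ₂ z)) y) x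
        = 2 * Real.sqrt (σ₁ x * σ₂ x) *
            (lap (fun z => Real.sqrt (σ₁ z)) x / Real.sqrt (σ₁ x)
              - lap (fun z => Real.sqrt (σ₂ z)) x / Real.sqrt (σ₂ x)) := by
  intro x hx
  have hC₁ (y) (hy : y ∈ O) : ContDiffAt ℝ 2 σ₁ y := hσ₁.contDiffAt (hO.mem_nhds hy)
  have hC₂ (y) (hy : y ∈ O) : ContDiffAt ℝ 2 σ₂ y := hσ₂.contDiffAt (hO.mem_nhds hy)
  have hu₁ : ContDiffAt ℝ 2 (fun z => √(σ₁ z)) x := (hC₁ x hx).sqrt (hpos₁ x hx).ne'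
  have hu₂ : ContDiffAt ℝ 2 (fun z => √(σ₂ z)) x := (hC₂ x hx).sqrt (hpos₂ x hx).ne'
  have hfield : (fun y => √(σ₁ y * σ₂ y) • ∇ (fun z => log (σ₁ z / σ₂ z)) y) =ᶠ[𝓝 x]
      fun y => (2 : ℝ) •
        (√(σ₂ y) • ∇ (fun z => √(σ₁ z)) y - √(σ₁ y) • ∇ (fun z => √(σ₂ z)) y) := by
    filter_upwards [hO.mem_nhds hx] with y hy
    exact sqrt_mul_smul_gradient_log_div ((hC₁ y hy).differentiableAt two_ne_zero)
      ((hC₂ y hy).differentiableAt two_ne_zero) (hpos₁ y hy) (hpos₂ y hy)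
  rw [ediv_congr_of_eventuallyEq hfield, ediv_const_smul,
    ediv_smul_gradient_sub_smul_gradient (hu₂.differentiableAt two_ne_zero)
      (hu₁.differentiableAt two_ne_zero) hu₂.differentiableAt_gradient
      hu₁.differentiableAt_gradient,
    sqrt_mul (hpos₁ x hx).le]
  have hu₁_pos := sqrt_pos.mpr (hpos₁ x hx)
  have hu₂_pos := sqrt_pos.mpr (hpos₂ x hx)
  field_simp
end
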